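/- Let d ≥ 1, let c be the 3-cycle (0 1 2) of Fin 3, and let M_− := W_c − W_{c⁻¹} (permutation operators of local dimension d). Then for all permutations π, σ of Fin 3: Tr[(M_−^A ⊗ M_−^B) · (W_π^A ⊗ W_σ^B)] = d²(d²−1)² if π and σ are 3-cycles with π = σ; it equals −d²(d²−1)² if π and σ are 3-cycles with π ≠ σ; and it equals 0 in all other cases (i.e., whenever π or σ is not a 3-cycle). Here both tensor factors have local dimension d. (Paper's Eq. (WAWBterm).) -/

import Mathlib

/-!
`W` is an antihomomorphism, `W_α W_β = W_{βα}`, with `W_{τ⁻¹} = W_τᵀ`, so `τ ↦ Tr W_τ` is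
invariant under conjugation and inversion. Hence `f π := Tr[M₋ W_π]` satisfies
`f π⁻¹ = -f π`, so `f` vanishes on involutions, which in `S₃` are exactly the permutations
that are not 3-cycles. On the 3-cycles, `f c = Tr W_{c⁻¹} - Tr W_1 = d - d³` and
`f c⁻¹ = d³ - d`, and the trace of the Kronecker product factorises as `f π * f σ`.
-/

open Matrix Kronecker

noncomputable section

/-- Permutation operator `W_π` of local index `I`: `W_π[b,a] = 1` iff `b = a ∘ π`. -/
def permOp (I : Type*) [DecidableEq I] {t : ℕ} (π : Equiv.Perm (Fin t)) :
    Matrix (Fin t → I) (Fin t → I) ℂ :=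
  Matrix.of fun b a => if b = a ∘ ⇑π then 1 else 0

/-- the 3-cycle (0 1 2) of `Fin 3` -/
def c3 : Equiv.Perm (Fin 3) := finRotate 3

/-- `M₋ = W_c − W_{c⁻¹}` of local dimension `d`. -/
def Mminus (d : ℕ) : Matrix (Fin 3 → Fin d) (Fin 3 → Fin d) ℂ :=
  permOp (Fin d) c3 - permOp (Fin d) c3⁻¹

theorem apply_eq_apply_zero_of_eq_comp_finRotate {I : Type*} {n : ℕ} {a : Fin (n + 1) → I}
    (ha : a = a ∘ finRotate (n + 1)) (i : Fin (n + 1)) : a i = a 0 := by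
  induction i using Fin.induction with
  | zero => rfl
  | succ i ih =>
    rw [← ih, congrFun ha i.castSucc, Function.comp_apply, finRotate_apply, Fin.coeSucc_eq_succ]

section PermOp

variable {I : Type*} [DecidableEq I] {t : ℕ}

theorem permOp_inv (τ : Equiv.Perm (Fin t)) : permOp I τ⁻¹ = (permOp I τ)ᵀ := by
  ext b a
  simp only [permOp, Matrix.of_apply, Matrix.transpose_apply]
  congr 1
  simp only [eq_iff_iff]
  constructor <;> rintro rfl <;> ext i <;> simp

variable [Fintype I]

theorem permOp_mul (α β : Equiv.Perm (Fin t)) :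
    permOp I α * permOp I β = permOp I (β * α) := by
  ext b a
  simp only [permOp, mul_apply, of_apply, mul_ite, mul_one, mul_zero, Finset.sum_ite_eq',
    Finset.mem_univ, ↓reduceIte, Function.comp_assoc, Equiv.Perm.coe_mul]
  congr

theorem trace_permOp (τ : Equiv.Perm (Fin t)) :
    (permOp I τ).trace = (Finset.univ.filter fun a : Fin t → I => a = a ∘ τ).card := by
  simp [Matrix.trace, permOp, Finset.sum_boole]

theorem trace_permOp_one :
    (permOp I (1 : Equiv.Perm (Fin t))).trace = (Fintype.card I : ℂ) ^ t := by
  simp [trace_permOp]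

theorem trace_permOp_inv (τ : Equiv.Perm (Fin t)) :
    (permOp I τ⁻¹).trace = (permOp I τ).trace := by
  rw [permOp_inv, trace_transpose]

theorem trace_permOp_mul_comm (α β : Equiv.Perm (Fin t)) :
    (permOp I (α * β)).trace = (permOp I (β * α)).trace := by
  rw [← permOp_mul, ← permOp_mul, trace_mul_comm]

theorem trace_permOp_finRotate (n : ℕ) :
    (permOp I (finRotate (n + 1))).trace = Fintype.card I := by
  have : Finset.univ.filter (fun a : Fin (n + 1) → I => a = a ∘ finRotate (n + 1)) =
      Finset.univ.map ⟨Function.const _, Function.const_injective⟩ := by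
    ext a
    simp only [Finset.mem_filter, Finset.mem_univ, true_and, Finset.mem_map,
      Function.Embedding.coeFn_mk]
    constructor
    · intro ha
      exact ⟨a 0, funext fun i => (apply_eq_apply_zero_of_eq_comp_finRotate ha i).symm⟩
    · rintro ⟨x, rfl⟩
      rfl
  rw [trace_permOp, this, Finset.card_map, Finset.card_univ]

theorem trace_sub_permOp_inv_mul_permOp (c π : Equiv.Perm (Fin t)) :
    ((permOp I c - permOp I c⁻¹) * permOp I π).trace =
      (permOp I (π * c)).trace - (permOp I (π * c⁻¹)).trace := by
  rw [sub_mul, trace_sub, permOp_mul, permOp_mul]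

theorem trace_sub_permOp_inv_mul_permOp_inv (c π : Equiv.Perm (Fin t)) :
    ((permOp I c - permOp I c⁻¹) * permOp I π⁻¹).trace =
      -((permOp I c - permOp I c⁻¹) * permOp I π).trace := by
  have h₁ : (permOp I (π⁻¹ * c)).trace = (permOp I (π * c⁻¹)).trace := by
    rw [← inv_inv c, ← _root_.mul_inv_rev, trace_permOp_inv, trace_permOp_mul_comm, inv_inv]
  have h₂ : (permOp I (π⁻¹ * c⁻¹)).trace = (permOp I (π * c)).trace := by
    rw [← _root_.mul_inv_rev, trace_permOp_inv, trace_permOp_mul_comm]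
  rw [trace_sub_permOp_inv_mul_permOp, trace_sub_permOp_inv_mul_permOp, h₁, h₂, neg_sub]

theorem trace_sub_permOp_inv_mul_permOp_of_inv_eq {c π : Equiv.Perm (Fin t)} (hπ : π⁻¹ = π) :
    ((permOp I c - permOp I c⁻¹) * permOp I π).trace = 0 := by
  have h := trace_sub_permOp_inv_mul_permOp_inv (I := I) c π
  rwa [hπ, self_eq_neg] at h

end PermOp

theorem isThreeCycle_iff_eq_c3_or_eq_c3_inv (τ : Equiv.Perm (Fin 3)) :
    τ.IsThreeCycle ↔ τ = c3 ∨ τ = c3⁻¹ := by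
  revert τ
  simp only [← card_support_eq_three_iff]
  decide

theorem inv_eq_self_of_not_isThreeCycle {τ : Equiv.Perm (Fin 3)} (hτ : ¬τ.IsThreeCycle) :
    τ⁻¹ = τ := by
  revert τ
  simp only [← card_support_eq_three_iff]
  decide

theorem trace_Mminus_mul_c3 (d : ℕ) :
    (Mminus d * permOp (Fin d) c3).trace = d - d ^ 3 := by
  rw [Mminus, trace_sub_permOp_inv_mul_permOp, show c3 * c3 = c3⁻¹ by decide, mul_inv_cancel,
    trace_permOp_inv, c3, trace_permOp_finRotate, trace_permOp_one, Fintype.card_fin]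

theorem trace_Mminus_mul_c3_inv (d : ℕ) :
    (Mminus d * permOp (Fin d) c3⁻¹).trace = d ^ 3 - d := by
  rw [Mminus, trace_sub_permOp_inv_mul_permOp_inv, ← Mminus, trace_Mminus_mul_c3, neg_sub]

theorem trace_Mminus_mul_of_not_isThreeCycle (d : ℕ) {τ : Equiv.Perm (Fin 3)}
    (hτ : ¬τ.IsThreeCycle) : (Mminus d * permOp (Fin d) τ).trace = 0 :=
  trace_sub_permOp_inv_mul_permOp_of_inv_eq (inv_eq_self_of_not_isThreeCycle hτ)

theorem stmt_16_general (d : ℕ) (π σ : Equiv.Perm (Fin 3)) :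
    (π.IsThreeCycle → σ.IsThreeCycle →
      ((Mminus d ⊗ₖ Mminus d) * (permOp (Fin d) π ⊗ₖ permOp (Fin d) σ)).trace =
        if π = σ then (d : ℂ) ^ 2 * ((d : ℂ) ^ 2 - 1) ^ 2
        else -((d : ℂ) ^ 2 * ((d : ℂ) ^ 2 - 1) ^ 2)) ∧
    (¬(π.IsThreeCycle ∧ σ.IsThreeCycle) →
      ((Mminus d ⊗ₖ Mminus d) * (permOp (Fin d) π ⊗ₖ permOp (Fin d) σ)).trace = 0) := by
  rw [← mul_kronecker_mul, trace_kronecker]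
  have hc3 : c3 ≠ c3⁻¹ := by decide
  refine ⟨fun hπ hσ => ?_, fun h => ?_⟩
  · rcases (isThreeCycle_iff_eq_c3_or_eq_c3_inv π).mp hπ with rfl | rfl <;>
      rcases (isThreeCycle_iff_eq_c3_or_eq_c3_inv σ).mp hσ with rfl | rfl <;>
      simp only [trace_Mminus_mul_c3, trace_Mminus_mul_c3_inv, hc3, hc3.symm, if_true, if_false] <;>
      ring
  · rcases not_and_or.mp h with h | h <;>
      simp [trace_Mminus_mul_of_not_isThreeCycle d h]

theorem stmt_16 (d : ℕ) (hd : 1 ≤ d) (π σ : Equiv.Perm (Fin 3)) :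
    (π.IsThreeCycle → σ.IsThreeCycle →
      ((Mminus d ⊗ₖ Mminus d) * (permOp (Fin d) π ⊗ₖ permOp (Fin d) σ)).trace =
        if π = σ then (d : ℂ) ^ 2 * ((d : ℂ) ^ 2 - 1) ^ 2
        else -((d : ℂ) ^ 2 * ((d : ℂ) ^ 2 - 1) ^ 2)) ∧
    (¬(π.IsThreeCycle ∧ σ.IsThreeCycle) →
      ((Mminus d ⊗ₖ Mminus d) * (permOp (Fin d) π ⊗ₖ permOp (Fin d) σ)).trace = 0) :=
  stmt_16_general d π σ
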